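/- For every nonnegative integer λ and every n with 2^λ ≤ n < 2^{λ+1}, the mean μ_n = (1/(n+1)) ∑_{t=0}^{n} ν₂(C(n,t)) satisfies μ_n = λ − s₂(n) + O(1), with an absolute implied constant. -/

import Mathlib

/-- `s₂`, the binary sum-of-digits function. -/
def s2 (n : ℕ) : ℕ := (Nat.digits 2 n).sum



lemma s2_two_mul (m : ℕ) : s2 (2 * m) = s2 m := by
  rcases Nat.eq_zero_or_pos m with h | h
  · simp [h, s2]
  · unfold s2
    rw [Nat.digits_def' (by norm_num : 1 < 2) (by omega)]
    simp [Nat.mul_div_cancel_left, Nat.mul_mod_right]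

lemma s2_two_mul_add_one (m : ℕ) : s2 (2 * m + 1) = s2 m + 1 := by
  unfold s2
  rw [Nat.digits_def' (by norm_num : 1 < 2) (by omega)]
  have h1 : (2 * m + 1) % 2 = 1 := by omega
  have h2 : (2 * m + 1) / 2 = m := by omega
  rw [h1, h2]
  simp [Nat.add_comm]

lemma s2_two_mul_add (m r : ℕ) (hr : r ≤ 1) : s2 (2 * m + r) = s2 m + r := by
  interval_cases r
  · simpa using s2_two_mul m
  · exact s2_two_mul_add_one m

lemma s2_id_of_le_one (k : ℕ) (hk : k ≤ 1) : s2 k = k := by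
  interval_cases k <;> simp [s2]

lemma s2_le_log (n : ℕ) : s2 n ≤ Nat.log 2 n + 1 := by
  rcases Nat.eq_zero_or_pos n with h | h
  · simp [h, s2]
  · have hlen : (Nat.digits 2 n).length = Nat.log 2 n + 1 :=
      Nat.digits_len 2 n (by norm_num) (by omega)
    calc s2 n ≤ (Nat.digits 2 n).length * 1 := by
          apply List.sum_le_card_nsmul
          intro x hx
          have := Nat.digits_lt_base (by norm_num) hx
          omega
      _ = Nat.log 2 n + 1 := by rw [hlen, mul_one]

lemma s2_add_le' : ∀ n a b c : ℕ, a + b + c = n → c ≤ 1 → s2 (a + b + c) ≤ s2 a + s2 b + c := by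
  intro n
  induction n using Nat.strong_induction_on with
  | _ n ih =>
    intro a b c hn hc
    set a' := a / 2 with ha'
    set b' := b / 2 with hb'
    set ra := a % 2 with hra'
    set rb := b % 2 with hrb'
    have ha : a = 2 * a' + ra := by omega
    have hb : b = 2 * b' + rb := by omega
    have hra : ra ≤ 1 := by omega
    have hrb : rb ≤ 1 := by omega
    have hsa : s2 a = s2 a' + ra := by rw [ha]; exact s2_two_mul_add _ _ hra
    have hsb : s2 b = s2 b' + rb := by rw [hb]; exact s2_two_mul_add _ _ hrb
    set q := (ra + rb + c) / 2 with hq'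
    set r := (ra + rb + c) % 2 with hr'
    have hqr : ra + rb + c = 2 * q + r := by omega
    rcases Nat.eq_zero_or_pos (a' + b' + q) with h0 | h0
    · have h1 : a + b + c ≤ 1 := by omega
      rw [s2_id_of_le_one _ h1, hsa, hsb, s2_id_of_le_one a' (by omega),
        s2_id_of_le_one b' (by omega)]
      omega
    · have habc : a + b + c = 2 * (a' + b' + q) + r := by omega
      rw [habc, s2_two_mul_add _ _ (by omega)]
      have hlt : a' + b' + q < n := by omega
      have := ih _ hlt a' b' q rfl (by omega)
      omega

lemma s2_add_le (a b : ℕ) : s2 (a + b) ≤ s2 a + s2 b := by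
  have := s2_add_le' (a + b + 0) a b 0 rfl (by omega)
  simpa using this

open Finset
noncomputable def S (N : ℕ) : ℤ := ∑ t ∈ range N, (s2 t : ℤ)

lemma S_two_mul (M : ℕ) : S (2 * M) = 2 * S M + M := by
  induction M with
  | zero => simp [S]
  | succ m ih =>
    have h2 : 2 * (m + 1) = (2 * m + 1) + 1 := by ring
    simp only [S] at ih ⊢
    rw [h2, Finset.sum_range_succ, Finset.sum_range_succ, Finset.sum_range_succ,
      s2_two_mul m, s2_two_mul_add_one m]
    push_cast at ih ⊢
    linarith

lemma S_bound : ∀ N : ℕ, 1 ≤ N →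
    |2 * S N - N * (Nat.log 2 N : ℤ)| ≤ 4 * N - 2 * (Nat.log 2 N : ℤ) - 4 := by
  intro N
  induction N using Nat.strong_induction_on with
  | _ N ih =>
    intro hN
    rcases eq_or_lt_of_le hN with h1 | h1
    · simp [← h1, S, s2]
    · -- N ≥ 2
      set M := N / 2 with hM
      have hM1 : 1 ≤ M := by omega
      have hlog : Nat.log 2 N = Nat.log 2 M + 1 := by
        have h3 := Nat.log_div_base 2 N
        rw [← hM] at h3
        have h2 : 1 ≤ Nat.log 2 N := Nat.le_log_of_pow_le (by norm_num) (by omega)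
        omega
      have hIH := ih M (by omega) hM1
      have hs2M : (s2 M : ℤ) ≤ (Nat.log 2 M : ℤ) + 1 := by exact_mod_cast s2_le_log M
      have hs2M0 : (0 : ℤ) ≤ (s2 M : ℤ) := by positivity
      rcases Nat.even_or_odd N with ⟨m, hm⟩ | ⟨m, hm⟩
      · have hm' : N = 2 * M := by omega
        have hS : S N = 2 * S M + M := by rw [hm', S_two_mul]
        rw [hS, hlog]
        rw [abs_le] at hIH ⊢
        obtain ⟨i1, i2⟩ := hIH
        have hNc : (N : ℤ) = 2 * M := by exact_mod_cast congrArg (Nat.cast : ℕ → ℤ) hm'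
        rw [hNc]
        push_cast
        constructor <;> nlinarith
      · have hm' : N = 2 * M + 1 := by omega
        have hS : S N = 2 * S M + M + s2 M := by
          rw [hm', S, Finset.sum_range_succ, ← S, S_two_mul, s2_two_mul M]
        rw [hS, hlog]
        rw [abs_le] at hIH ⊢
        obtain ⟨i1, i2⟩ := hIH
        have hNc : (N : ℤ) = 2 * M + 1 := by exact_mod_cast congrArg (Nat.cast : ℕ → ℤ) hm'
        rw [hNc]
        push_cast
        constructor <;> nlinarith

lemma kummer (n t : ℕ) (ht : t ≤ n) :
    (padicValNat 2 (n.choose t) : ℤ) = s2 t + s2 (n - t) - s2 n := by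
  haveI : Fact (Nat.Prime 2) := ⟨Nat.prime_two⟩
  have h := sub_one_mul_padicValNat_choose_eq_sub_sum_digits (p := 2) ht
  have hsub : s2 n ≤ s2 t + s2 (n - t) := by
    have := s2_add_le t (n - t)
    rwa [Nat.add_sub_cancel' ht] at this
  have h' : padicValNat 2 (n.choose t) = s2 t + s2 (n - t) - s2 n := by
    simpa [s2] using h
  omega

lemma sum_val (n : ℕ) :
    (∑ t ∈ Finset.range (n + 1), (padicValNat 2 (n.choose t) : ℤ)) =
     2 * S (n + 1) - (n + 1) * (s2 n : ℤ) := by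
  have h1 : (∑ t ∈ Finset.range (n + 1), (padicValNat 2 (n.choose t) : ℤ)) =
      ∑ t ∈ Finset.range (n + 1), ((s2 t : ℤ) + (s2 (n - t) : ℤ) - (s2 n : ℤ)) := by
    apply Finset.sum_congr rfl
    intro t ht
    rw [Finset.mem_range] at ht
    rw [kummer n t (by omega)]
  rw [h1]
  have h2 : (∑ t ∈ Finset.range (n + 1), ((s2 (n - t)) : ℤ)) =
      ∑ t ∈ Finset.range (n + 1), ((s2 t) : ℤ) := by
    have := Finset.sum_range_reflect (fun j => ((s2 j) : ℤ)) (n + 1)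
    simpa using this
  rw [Finset.sum_sub_distrib, Finset.sum_add_distrib, h2, Finset.sum_const,
    Finset.card_range, S]
  push_cast
  ring

theorem mean_valuation_row :
    ∃ C : ℝ, ∀ lam n : ℕ, 2 ^ lam ≤ n → n < 2 ^ (lam + 1) →
      |(∑ t ∈ Finset.range (n + 1), (padicValNat 2 (n.choose t) : ℝ)) / (n + 1)
        - ((lam : ℝ) - s2 n)| ≤ C := by
  use 5
  intro lam n h1 h2
  set N := n + 1 with hN
  -- log bounds
  set L := Nat.log 2 N with hL
  have hlam_le : lam ≤ L := Nat.le_log_of_pow_le (by norm_num) (by omega)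
  have hL_le : L ≤ lam + 1 := by
    have : N ≤ 2 ^ (lam + 1) := by omega
    calc L ≤ Nat.log 2 (2 ^ (lam + 1)) := Nat.log_mono_right this
      _ = lam + 1 := Nat.log_pow (by norm_num) _
  have hSb := S_bound N (by omega)
  have key : |2 * S N - (N : ℤ) * lam| ≤ 5 * N := by
    have h3 : |2 * S N - (N : ℤ) * L| ≤ 4 * N := by
      have : (0 : ℤ) ≤ (L : ℤ) := by positivity
      have h4 : (4 : ℤ) * N - 2 * L - 4 ≤ 4 * N := by linarith
      linarith [hSb]
    have h5 : |(N : ℤ) * L - (N : ℤ) * lam| ≤ N := by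
      rw [← mul_sub, abs_mul]
      have : |(L : ℤ) - lam| ≤ 1 := by
        rw [abs_le]
        constructor <;> [skip; skip] <;>
          · have := hlam_le; have := hL_le
            push_cast
            omega
      calc |(N : ℤ)| * |(L : ℤ) - lam| ≤ |(N : ℤ)| * 1 := by
            apply mul_le_mul_of_nonneg_left this (abs_nonneg _)
        _ = N := by rw [mul_one, abs_of_nonneg (by positivity)]
    calc |2 * S N - (N : ℤ) * lam|
        ≤ |2 * S N - (N : ℤ) * L| + |(N : ℤ) * L - (N : ℤ) * lam| := by
          have := abs_sub_abs_le_abs_sub (2 * S N - (N : ℤ) * lam) 0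
          exact (abs_sub_le _ _ _)
      _ ≤ 4 * N + N := by linarith
      _ = 5 * N := by ring
  -- convert to real
  have hsum : (∑ t ∈ Finset.range (n + 1), (padicValNat 2 (n.choose t) : ℝ)) =
      ((2 * S N - (N : ℤ) * (s2 n : ℤ) : ℤ) : ℝ) := by
    have := sum_val n
    rw [← hN] at this
    have h' : (∑ t ∈ Finset.range (n + 1), (padicValNat 2 (n.choose t) : ℤ)) =
        2 * S N - (N : ℤ) * (s2 n : ℤ) := by
      rw [sum_val n, hN]; push_cast; ring
    rw [← h', Int.cast_sum]; simp only [Int.cast_natCast]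
  rw [hsum]
  have hNpos : (0 : ℝ) < ((n : ℝ) + 1) := by positivity
  have hrw : ((2 * S N - (N : ℤ) * (s2 n : ℤ) : ℤ) : ℝ) / ((n : ℝ) + 1)
      - ((lam : ℝ) - s2 n) = ((2 * S N - (N : ℤ) * (lam : ℤ) : ℤ) : ℝ) / ((n : ℝ) + 1) := by
    field_simp
    push_cast [hN]
    ring
  rw [hrw, abs_div, abs_of_pos hNpos, div_le_iff₀ hNpos]
  have : (|2 * S N - (N : ℤ) * lam| : ℝ) ≤ ((5 * N : ℤ) : ℝ) := by exact_mod_cast key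
  push_cast [hN] at this ⊢
  linarith
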